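/- arXiv:1610.02477 — 2 statements merged into one kernel-verified Lean document; each statement's English description precedes it below -/
import Mathlib

section
/- Let ρ^{AB} be a bipartite density matrix with entries p_{ij,kl} = ⟨i j|ρ|k l⟩. If for every positive semidefinite operator N ≤ I on B the matrix with (i,k) entry Σ_{jl} p_{ij,kl} N_{lj} has vanishing off-diagonal part (i ≠ k), then p_{ij,kl} = 0 for all j, l whenever i ≠ k; equivalently ρ^{AB} = Σ_i |i⟩⟨i| ⊗ σ_i for some positive semidefinite σ_i, i.e., ρ^{AB} is an incoherent-quantum state. -/
/-!
Fix `i ≠ k` and let `M` be the block `M j l = p_{ij,kl}`; the hypothesis says `tr (M N) = 0` for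
every effect `0 ≤ N ≤ 1`. Every rank-one projection `u u†` with `u` a unit vector is an effect,
and `tr (M u u†) = u† M u`. So the quadratic form of `M` vanishes on the unit sphere, hence
everywhere by scaling, and by complex polarization `M = 0`.
-/

open Matrix BigOperators Finset ComplexOrder
open scoped MatrixOrder

theorem LinearMap.eq_zero_of_forall_norm_eq_one_inner_map_self_eq_zero
    {V : Type*} [NormedAddCommGroup V] [InnerProductSpace ℂ V] {T : V →ₗ[ℂ] V}
    (hT : ∀ x : V, ‖x‖ = 1 → inner ℂ (T x) x = 0) : T = 0 := by
  refine (inner_map_self_eq_zero T).mp fun x => ?_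
  rcases eq_or_ne x 0 with rfl | hx
  · simp
  have := hT _ (norm_smul_inv_norm (𝕜 := ℂ) hx)
  rw [map_smul, inner_smul_left, inner_smul_right] at this
  simpa [hx] using this

namespace Matrix

variable {ι : Type*} [Fintype ι]

theorem isStarProjection_vecMulVec_star {α : Type*} [Semiring α] [StarRing α] {u : ι → α}
    (hu : star u ⬝ᵥ u = 1) : IsStarProjection (vecMulVec u (star u)) where
  isIdempotentElem := by
    rw [IsIdempotentElem, vecMulVec_mul_vecMulVec, hu, one_smul]
  isSelfAdjoint := by
    rw [IsSelfAdjoint, star_eq_conjTranspose, conjTranspose_vecMulVec, star_star]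

variable [DecidableEq ι]

theorem eq_zero_of_forall_star_dotProduct_eq_one_star_dotProduct_mulVec_eq_zero
    {M : Matrix ι ι ℂ} (hM : ∀ u : ι → ℂ, star u ⬝ᵥ u = 1 → star u ⬝ᵥ M *ᵥ u = 0) : M = 0 := by
  refine (toEuclideanLin (𝕜 := ℂ)).map_eq_zero_iff.mp
    (LinearMap.eq_zero_of_forall_norm_eq_one_inner_map_self_eq_zero fun x hx => ?_)
  have hunit : star x.ofLp ⬝ᵥ x.ofLp = 1 := by
    rw [dotProduct_comm, ← EuclideanSpace.inner_eq_star_dotProduct, inner_self_eq_norm_sq_to_K,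
      hx]
    simp
  rw [EuclideanSpace.inner_eq_star_dotProduct, ofLp_toLpLin, toLin'_apply, dotProduct_star,
    dotProduct_comm, hM _ hunit, star_zero]

theorem eq_zero_of_forall_mem_Icc_trace_mul_eq_zero {M : Matrix ι ι ℂ}
    (hM : ∀ N ∈ Set.Icc (0 : Matrix ι ι ℂ) 1, (M * N).trace = 0) : M = 0 := by
  refine eq_zero_of_forall_star_dotProduct_eq_one_star_dotProduct_mulVec_eq_zero fun u hu => ?_
  rw [dotProduct_comm, ← trace_vecMulVec, ← mul_vecMulVec]
  exact hM _ (isStarProjection_vecMulVec_star hu).mem_Icc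

end Matrix

theorem no_RCC_for_all_operations_implies_incoherent_quantum_general
    {dA dB : ℕ}
    (ρAB : Matrix (Fin dA × Fin dB) (Fin dA × Fin dB) ℂ)
    (h : ∀ N : Matrix (Fin dB) (Fin dB) ℂ, N.PosSemidef →
        ((1 : Matrix (Fin dB) (Fin dB) ℂ) - N).PosSemidef →
        ∀ i k : Fin dA, i ≠ k → ∑ j, ∑ l, ρAB (i, j) (k, l) * N l j = 0) :
    ∀ i k : Fin dA, i ≠ k → ∀ j l : Fin dB, ρAB (i, j) (k, l) = 0 := by
  intro i k hik j l
  have hblock : ρAB.submatrix (Prod.mk i) (Prod.mk k) = 0 :=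
    eq_zero_of_forall_mem_Icc_trace_mul_eq_zero fun N hN =>
      h N hN.1.posSemidef hN.2 i k hik
  exact congrFun (congrFun hblock j) l

/-- If for every positive semidefinite `N ≤ I` on B the post-operation reduced state of A
(with entries `Σ_{jl} p_{ij,kl} N_{lj}`) has vanishing off-diagonal part, then
`ρ^{AB}` is an incoherent-quantum state: all entries with `i ≠ k` vanish. -/
theorem no_RCC_for_all_operations_implies_incoherent_quantum
    {dA dB : ℕ}
    (ρAB : Matrix (Fin dA × Fin dB) (Fin dA × Fin dB) ℂ)
    (hρ : ρAB.PosSemidef) (htr : ρAB.trace = 1)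
    (h : ∀ N : Matrix (Fin dB) (Fin dB) ℂ, N.PosSemidef →
        ((1 : Matrix (Fin dB) (Fin dB) ℂ) - N).PosSemidef →
        ∀ i k : Fin dA, i ≠ k → ∑ j, ∑ l, ρAB (i, j) (k, l) * N l j = 0) :
    ∀ i k : Fin dA, i ≠ k → ∀ j l : Fin dB, ρAB (i, j) (k, l) = 0 :=
  no_RCC_for_all_operations_implies_incoherent_quantum_general ρAB h
end

section
/- Let |ψ^{AB}⟩ = Σ_i √ω_i |i⟩|β_i⟩ (Schmidt form, Σω_i = 1, {|β_i⟩} orthonormal), $ a CP map on B with N = Σ_n F_n†F_n, p' = tr[(I⊗$)|ψ⟩⟨ψ|] > 0, N_{ji} = ⟨β_j|N|β_i⟩. Then the l1-coherence of the post-operation state ρ^A' satisfies C_{l1}(ρ^A') = (1/p') Σ_{i≠j} √(ω_i ω_j)|N_{ji}| ≤ (E(|ψ^{AB}⟩)/p') · √(Σ_{j<i} |N_{ji}|²), where E(|ψ^{AB}⟩) = √(2 Σ_{i≠j} ω_i ω_j) is the concurrence. -/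
open Matrix Kronecker BigOperators Finset ComplexOrder

noncomputable def l1Coh {d : ℕ} (ρ : Matrix (Fin d) (Fin d) ℂ) : ℝ :=
  ∑ i, ∑ j, if i ≠ j then ‖ρ i j‖ else 0

noncomputable def ptraceB {dA dB : ℕ}
    (ρ : Matrix (Fin dA × Fin dB) (Fin dA × Fin dB) ℂ) : Matrix (Fin dA) (Fin dA) ℂ :=
  fun i k => ∑ j, ρ (i, j) (k, j)

/-! The Kraus operators act on `B` only, so the reduced state is
`ρ^A'_{ik} = (1/p') √(ω_i ω_k) ⟨β_k|N|β_i⟩`, which gives the formula for `C_{l1}`. The bound is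
Cauchy–Schwarz over the off-diagonal pairs `i ≠ j`; since `N` is Hermitian, `|N_{ji}| = |N_{ij}|`,
so the off-diagonal sum of `|N_{ji}|²` is twice the sum over `j < i`. -/

theorem l1Coh_smul {d : ℕ} (c : ℂ) (ρ : Matrix (Fin d) (Fin d) ℂ) :
    l1Coh (c • ρ) = ‖c‖ * l1Coh ρ := by
  simp only [l1Coh, Finset.mul_sum, mul_ite, mul_zero, Matrix.smul_apply, smul_eq_mul, norm_mul]

theorem ptraceB_sum {dA dB : ℕ} {ι : Type*} (s : Finset ι)
    (ρ : ι → Matrix (Fin dA × Fin dB) (Fin dA × Fin dB) ℂ) :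
    ptraceB (∑ n ∈ s, ρ n) = ∑ n ∈ s, ptraceB (ρ n) := by
  ext i k
  simp only [ptraceB, Matrix.sum_apply]
  exact Finset.sum_comm

theorem ptraceB_kraus_term_apply {dA dB : ℕ} (ψ : Fin dA × Fin dB → ℂ)
    (F : Matrix (Fin dB) (Fin dB) ℂ) (i k : Fin dA) :
    ptraceB ((1 ⊗ₖ F) * vecMulVec ψ (star ψ) * (1 ⊗ₖ F)ᴴ) i k
      = ∑ l, ∑ m, star (ψ (k, l)) * (Fᴴ * F) l m * ψ (i, m) := by
  have hv : ∀ a b, ((1 ⊗ₖ F) *ᵥ ψ) (a, b) = ∑ m, F b m * ψ (a, m) := by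
    intro a b
    simp [mulVec, dotProduct, Fintype.sum_prod_type, one_apply]
  rw [mul_vecMulVec, vecMulVec_mul, ← star_mulVec]
  simp only [ptraceB, vecMulVec_apply, Pi.star_apply, hv, star_sum, star_mul', Matrix.mul_apply,
    conjTranspose_apply, Finset.sum_mul, Finset.mul_sum]
  rw [Finset.sum_comm]
  refine Finset.sum_congr rfl fun _ _ => ?_
  rw [Finset.sum_comm]
  exact Finset.sum_congr rfl fun _ _ => Finset.sum_congr rfl fun _ _ => by ring

theorem ptraceB_kraus_apply {dA dB : ℕ} {ι : Type*} [Fintype ι] (ψ : Fin dA × Fin dB → ℂ)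
    (F : ι → Matrix (Fin dB) (Fin dB) ℂ) (i k : Fin dA) :
    ptraceB (∑ n, (1 ⊗ₖ F n) * vecMulVec ψ (star ψ) * (1 ⊗ₖ F n)ᴴ) i k
      = ∑ l, ∑ m, star (ψ (k, l)) * (∑ n, (F n)ᴴ * F n) l m * ψ (i, m) := by
  simp only [ptraceB_sum, Matrix.sum_apply, ptraceB_kraus_term_apply,
    Finset.mul_sum, Finset.sum_mul]
  rw [Finset.sum_comm]
  exact Finset.sum_congr rfl fun _ _ => Finset.sum_comm

theorem Matrix.IsHermitian.star_sum_sum {n : Type*} [Fintype n] {N : Matrix n n ℂ}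
    (hN : N.IsHermitian) (u v : n → ℂ) :
    star (∑ l, ∑ m, star (u l) * N l m * v m) = ∑ l, ∑ m, star (v l) * N l m * u m := by
  simp only [star_sum, star_mul', star_star, hN.apply]
  rw [Finset.sum_comm]
  refine Finset.sum_congr rfl fun _ _ => Finset.sum_congr rfl fun _ _ => by ring

theorem sum_ite_ne_mul_le_sqrt_mul_sqrt {ι : Type*} [Fintype ι] [DecidableEq ι] (f g : ι → ι → ℝ) :
    ∑ i, ∑ j, (if i ≠ j then f i j * g i j else 0)
      ≤ √(∑ i, ∑ j, if i ≠ j then f i j ^ 2 else 0) *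
          √(∑ i, ∑ j, if i ≠ j then g i j ^ 2 else 0) := by
  simpa [Finset.sum_filter, Fintype.sum_prod_type] using
    Real.sum_mul_le_sqrt_mul_sqrt (univ.filter fun p : ι × ι => p.1 ≠ p.2)
      (fun p => f p.1 p.2) (fun p => g p.1 p.2)

theorem sum_ite_ne_eq_two_mul_sum_ite_lt {ι : Type*} [Fintype ι] [LinearOrder ι]
    (t : ι → ι → ℝ) (ht : ∀ i j, t i j = t j i) :
    ∑ i, ∑ j, (if i ≠ j then t i j else 0) = 2 * ∑ i, ∑ j, if j < i then t i j else 0 := by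
  have hsplit : ∀ i j : ι, (if i ≠ j then t i j else 0)
      = (if j < i then t i j else 0) + (if i < j then t i j else 0) := by
    intro i j
    rcases lt_trichotomy i j with h | rfl | h
    · simp [h, h.ne, h.not_gt]
    · simp
    · simp [h, h.ne', h.not_gt]
  have hswap : ∑ i, ∑ j, (if i < j then t i j else 0)
      = ∑ i, ∑ j, if j < i then t i j else 0 := by
    rw [Finset.sum_comm]
    simp only [ht]
  simp only [hsplit, Finset.sum_add_distrib, hswap]
  ring

theorem RCC_upper_bound_general
    {dA dB : ℕ} {ι : Type*} [Fintype ι]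
    (ω : Fin dA → ℝ) (hω : ∀ i, 0 < ω i)
    (β : Fin dA → Fin dB → ℂ)
    (ψ : Fin dA × Fin dB → ℂ)
    (hψ : ∀ i j, ψ (i, j) = (Real.sqrt (ω i) : ℂ) * β i j)
    (F : ι → Matrix (Fin dB) (Fin dB) ℂ)
    (N : Matrix (Fin dB) (Fin dB) ℂ) (hNdef : N = ∑ n, (F n)ᴴ * (F n))
    (Nmat : Fin dA → Fin dA → ℂ)
    (hNmat : ∀ j i, Nmat j i = ∑ l, ∑ m, (starRingEnd ℂ) (β j l) * N l m * β i m)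
    (ρAB' : Matrix (Fin dA × Fin dB) (Fin dA × Fin dB) ℂ)
    (hρAB' : ρAB' = ∑ n, ((1 : Matrix (Fin dA) (Fin dA) ℂ) ⊗ₖ F n) *
        Matrix.vecMulVec ψ (star ψ) * ((1 : Matrix (Fin dA) (Fin dA) ℂ) ⊗ₖ F n)ᴴ)
    (p' : ℝ) (hp'pos : 0 < p')
    (ρA' : Matrix (Fin dA) (Fin dA) ℂ)
    (hρA' : ρA' = (p' : ℂ)⁻¹ • ptraceB ρAB')
    (E : ℝ) (hE : E = Real.sqrt (2 * ∑ i, ∑ j, if i ≠ j then ω i * ω j else 0)) :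
    l1Coh ρA' = (1 / p') * ∑ i, ∑ j, (if i ≠ j then
        Real.sqrt (ω i * ω j) * ‖Nmat j i‖ else 0) ∧
    l1Coh ρA' ≤ (E / p') *
        Real.sqrt (∑ i, ∑ j, if j < i then ‖Nmat j i‖ ^ 2 else 0) := by
  have hN : N.IsHermitian :=
    hNdef ▸ isSelfAdjoint_sum _ fun n _ => isHermitian_conjTranspose_mul_self (F n)
  have hNmat_symm : ∀ i j, ‖Nmat j i‖ = ‖Nmat i j‖ := fun i j => by
    rw [← Complex.norm_conj, hNmat, hNmat]
    exact congrArg _ (hN.star_sum_sum _ _)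
  have hentry : ∀ i k, ptraceB ρAB' i k = (√(ω i) * √(ω k) : ℝ) * Nmat k i := by
    intro i k
    rw [hρAB', ptraceB_kraus_apply, ← hNdef, hNmat, Finset.mul_sum]
    refine Finset.sum_congr rfl fun l _ => ?_
    rw [Finset.mul_sum]
    refine Finset.sum_congr rfl fun m _ => ?_
    simp only [hψ, star_mul', Complex.star_def, Complex.conj_ofReal, Complex.ofReal_mul]
    ring
  have hcoh : l1Coh ρA' = (1 / p') * ∑ i, ∑ j, (if i ≠ j then
      Real.sqrt (ω i * ω j) * ‖Nmat j i‖ else 0) := by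
    rw [hρA', l1Coh_smul, norm_inv, Complex.norm_real, Real.norm_of_nonneg hp'pos.le, one_div]
    simp only [l1Coh, hentry, norm_mul, Complex.norm_real, Real.norm_of_nonneg
      (mul_nonneg (Real.sqrt_nonneg _) (Real.sqrt_nonneg _)), Real.sqrt_mul (hω _).le]
  refine ⟨hcoh, ?_⟩
  have hsq : ∀ i j, √(ω i * ω j) ^ 2 = ω i * ω j := fun i j =>
    Real.sq_sqrt (mul_nonneg (hω i).le (hω j).le)
  have hCS := sum_ite_ne_mul_le_sqrt_mul_sqrt (fun i j => √(ω i * ω j)) (fun i j => ‖Nmat j i‖)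
  rw [sum_ite_ne_eq_two_mul_sum_ite_lt (fun i j => ‖Nmat j i‖ ^ 2)
    fun i j => by rw [hNmat_symm]] at hCS
  simp only [hsq] at hCS
  calc l1Coh ρA' ≤ (1 / p') * (√(∑ i, ∑ j, if i ≠ j then ω i * ω j else 0) *
        √(2 * ∑ i, ∑ j, if j < i then ‖Nmat j i‖ ^ 2 else 0)) := by
        rw [hcoh]; gcongr
    _ = (E / p') * √(∑ i, ∑ j, if j < i then ‖Nmat j i‖ ^ 2 else 0) := by
      rw [hE, Real.sqrt_mul zero_le_two, Real.sqrt_mul zero_le_two]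
      ring

/-- Lemma 1: `C(ρ^A') = (1/p') Σ_{i≠j} √(ω_i ω_j)|N_{ji}|
  ≤ (E(ψ)/p') √(Σ_{j<i}|N_{ji}|²)`, with `E(ψ) = √(2 Σ_{i≠j} ω_i ω_j)`. -/
theorem RCC_upper_bound
    {dA dB : ℕ} {ι : Type*} [Fintype ι]
    (ω : Fin dA → ℝ) (hω : ∀ i, 0 < ω i) (hωsum : ∑ i, ω i = 1)
    (β : Fin dA → Fin dB → ℂ)
    (hβ : ∀ i k, ∑ j, (starRingEnd ℂ) (β i j) * β k j = if i = k then 1 else 0)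
    (ψ : Fin dA × Fin dB → ℂ)
    (hψ : ∀ i j, ψ (i, j) = (Real.sqrt (ω i) : ℂ) * β i j)
    (F : ι → Matrix (Fin dB) (Fin dB) ℂ)
    (N : Matrix (Fin dB) (Fin dB) ℂ) (hNdef : N = ∑ n, (F n)ᴴ * (F n))
    (Nmat : Fin dA → Fin dA → ℂ)
    (hNmat : ∀ j i, Nmat j i = ∑ l, ∑ m, (starRingEnd ℂ) (β j l) * N l m * β i m)
    (ρAB' : Matrix (Fin dA × Fin dB) (Fin dA × Fin dB) ℂ)
    (hρAB' : ρAB' = ∑ n, ((1 : Matrix (Fin dA) (Fin dA) ℂ) ⊗ₖ F n) *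
        Matrix.vecMulVec ψ (star ψ) * ((1 : Matrix (Fin dA) (Fin dA) ℂ) ⊗ₖ F n)ᴴ)
    (p' : ℝ) (hp' : p' = (ρAB'.trace).re) (hp'pos : 0 < p')
    (ρA' : Matrix (Fin dA) (Fin dA) ℂ)
    (hρA' : ρA' = (p' : ℂ)⁻¹ • ptraceB ρAB')
    (E : ℝ) (hE : E = Real.sqrt (2 * ∑ i, ∑ j, if i ≠ j then ω i * ω j else 0)) :
    l1Coh ρA' = (1 / p') * ∑ i, ∑ j, (if i ≠ j then
        Real.sqrt (ω i * ω j) * ‖Nmat j i‖ else 0) ∧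
    l1Coh ρA' ≤ (E / p') *
        Real.sqrt (∑ i, ∑ j, if j < i then ‖Nmat j i‖ ^ 2 else 0) :=
  RCC_upper_bound_general ω hω β ψ hψ F N hNdef Nmat hNmat ρAB' hρAB' p' hp'pos ρA' hρA' E hE
end
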